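/- Let A be a commutative ring of prime characteristic p, let f = 1 + ∑_{i≥1} aᵢ Xⁱ ∈ A[[X]], and let n be a positive integer not divisible by p. Then for every i ≥ 1, the coefficient of Xⁱ in fⁿ equals n·aᵢ plus an element of the subring of A generated by a₁, …, a_{i-1}. Consequently the subring of A generated by the coefficients of fⁿ equals the subring generated by the coefficients of f. -/

import Mathlib

/-!
Write `f ^ (n + 1) = f ^ n * f`. Since both factors have constant coefficient `1`, the
coefficient of `Xⁱ` in the product is `coeff i (f ^ n) + aᵢ` plus products of coefficients of
index strictly between `0` and `i`, which by induction on `n` lie in the subring generated by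
`a₁, …, a_{i-1}`. For the equality of subrings, `p ∤ n` makes `n` invertible in `A` with an
integer inverse, so `aᵢ` can be solved for, by strong induction on `i`, inside the subring
generated by the coefficients of `fⁿ`.
-/

namespace PowerSeries

variable {A : Type*} [CommRing A]

open Finset.HasAntidiagonal in
theorem coeff_mul_sub_coeff_mul_coeff_zero_sub_mem (S : Subring A) {p q : A⟦X⟧} {i : ℕ}
    (hi : 0 < i) (hp : ∀ j, 0 < j → j < i → coeff j p ∈ S)
    (hq : ∀ j, 0 < j → j < i → coeff j q ∈ S) :
    coeff i (p * q) - coeff i p * coeff 0 q - coeff 0 p * coeff i q ∈ S := by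
  have hi0 : (i, 0) ∈ antidiagonal i := by simp
  have h0i : (0, i) ∈ (antidiagonal i).erase (i, 0) := by simp [hi.ne]
  rw [coeff_mul, ← Finset.add_sum_erase _ _ hi0, ← Finset.add_sum_erase _ _ h0i]
  rw [add_sub_cancel_left, add_sub_cancel_left]
  refine Subring.sum_mem _ fun x hx => ?_
  obtain ⟨x₁, x₂⟩ := x
  simp only [Finset.mem_erase, ne_eq, Prod.mk.injEq, mem_antidiagonal] at hx
  exact Subring.mul_mem _ (hp x₁ (by omega) (by omega)) (hq x₂ (by omega) (by omega))

def lowerCoeffSubring (f : A⟦X⟧) (i : ℕ) : Subring A :=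
  Subring.closure {x | ∃ j, 1 ≤ j ∧ j < i ∧ x = coeff j f}

def coeffSubring (f : A⟦X⟧) : Subring A :=
  Subring.closure {x | ∃ i, 1 ≤ i ∧ x = coeff i f}

theorem coeff_mem_lowerCoeffSubring (f : A⟦X⟧) {i j : ℕ} (hj : 0 < j) (hji : j < i) :
    coeff j f ∈ lowerCoeffSubring f i :=
  Subring.subset_closure ⟨j, hj, hji, rfl⟩

theorem lowerCoeffSubring_mono (f : A⟦X⟧) : Monotone (lowerCoeffSubring f) :=
  fun _ _ h => Subring.closure_mono fun _ ⟨j, hj, hji, hx⟩ => ⟨j, hj, hji.trans_le h, hx⟩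

theorem lowerCoeffSubring_le_coeffSubring (f : A⟦X⟧) (i : ℕ) :
    lowerCoeffSubring f i ≤ coeffSubring f :=
  Subring.closure_mono fun _ ⟨j, hj, _, hx⟩ => ⟨j, hj, hx⟩

theorem coeff_pow_sub_natCast_mul_mem_lowerCoeffSubring {f : A⟦X⟧} (hf : constantCoeff f = 1)
    (n : ℕ) {i : ℕ} (hi : 0 < i) :
    coeff i (f ^ n) - n * coeff i f ∈ lowerCoeffSubring f i := by
  induction n generalizing i with
  | zero => simp [coeff_one, hi.ne']
  | succ n ih =>
    have hpow : ∀ j, 0 < j → j < i → coeff j (f ^ n) ∈ lowerCoeffSubring f i := by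
      intro j hj hji
      rw [← sub_add_cancel (coeff j (f ^ n)) (n * coeff j f)]
      exact Subring.add_mem _ (lowerCoeffSubring_mono f hji.le (ih hj))
        (Subring.mul_mem _ (natCast_mem _ n) (coeff_mem_lowerCoeffSubring f hj hji))
    have hmul := coeff_mul_sub_coeff_mul_coeff_zero_sub_mem _ hi hpow
      (fun j hj hji => coeff_mem_lowerCoeffSubring f hj hji)
    rw [coeff_zero_eq_constantCoeff_apply, coeff_zero_eq_constantCoeff_apply,
      map_pow constantCoeff, hf, one_pow] at hmul
    convert Subring.add_mem _ hmul (ih hi) using 1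
    rw [pow_succ]
    push_cast
    ring

theorem coeff_mem_coeffSubring_pow {f : A⟦X⟧} (hf : constantCoeff f = 1) {n : ℕ} {b : ℤ}
    (hb : (b : A) * n = 1) {i : ℕ} (hi : 0 < i) : coeff i f ∈ coeffSubring (f ^ n) := by
  induction i using Nat.strong_induction_on with
  | _ i ih =>
    have hlow : lowerCoeffSubring f i ≤ coeffSubring (f ^ n) :=
      Subring.closure_le.mpr fun _ ⟨j, hj, hji, hx⟩ => hx ▸ ih j hji hj
    have hdiff := hlow (coeff_pow_sub_natCast_mul_mem_lowerCoeffSubring hf n hi)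
    have hpow : coeff i (f ^ n) ∈ coeffSubring (f ^ n) := Subring.subset_closure ⟨i, hi, rfl⟩
    have hsolve : coeff i f = b * (coeff i (f ^ n) - (coeff i (f ^ n) - n * coeff i f)) := by
      linear_combination (-coeff i f) * hb
    rw [hsolve]
    exact Subring.mul_mem _ (intCast_mem _ b) (Subring.sub_mem _ hpow hdiff)

theorem coeffSubring_pow {f : A⟦X⟧} (hf : constantCoeff f = 1) {n : ℕ} {b : ℤ}
    (hb : (b : A) * n = 1) : coeffSubring (f ^ n) = coeffSubring f := by
  apply le_antisymm
  · refine Subring.closure_le.mpr fun _ ⟨i, hi, hx⟩ => hx ▸ ?_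
    rw [← sub_add_cancel (coeff i (f ^ n)) (n * coeff i f)]
    have hdiff := coeff_pow_sub_natCast_mul_mem_lowerCoeffSubring hf n hi
    exact Subring.add_mem _ (lowerCoeffSubring_le_coeffSubring f i hdiff)
      (Subring.mul_mem _ (natCast_mem _ n) (Subring.subset_closure ⟨i, hi, rfl⟩))
  · exact Subring.closure_le.mpr fun _ ⟨i, hi, hx⟩ =>
      hx ▸ coeff_mem_coeffSubring_pow hf hb hi

end PowerSeries

theorem stmt3_general (p : ℕ) (hp : p.Prime) (A : Type*) [CommRing A] [CharP A p]
    (f : PowerSeries A) (hf : PowerSeries.constantCoeff f = 1)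
    (n : ℕ) (hpn : ¬ p ∣ n) :
    (∀ i : ℕ, 1 ≤ i →
      ∃ c ∈ Subring.closure {x : A | ∃ j, 1 ≤ j ∧ j < i ∧ x = PowerSeries.coeff j f},
        PowerSeries.coeff i (f ^ n) = n * PowerSeries.coeff i f + c) ∧
    Subring.closure {x : A | ∃ i, 1 ≤ i ∧ x = PowerSeries.coeff i (f ^ n)} =
      Subring.closure {x : A | ∃ i, 1 ≤ i ∧ x = PowerSeries.coeff i f} := by
  have hb : ((n.gcdA p : ℤ) : A) * n = 1 := by
    rw [CharP.natCast_gcdA_mul_intCast_eq_gcd (p := p),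
      ((Nat.Prime.coprime_iff_not_dvd hp).mpr hpn).symm, Nat.cast_one]
  refine ⟨fun i hi => ?_, PowerSeries.coeffSubring_pow hf hb⟩
  exact ⟨_, PowerSeries.coeff_pow_sub_natCast_mul_mem_lowerCoeffSubring hf n hi, by ring⟩

/-- Let `A` have prime characteristic `p`, let `f = 1 + ∑_{i≥1} aᵢ Xⁱ`, and let `n > 0`
with `p ∤ n`. Then the coefficient of `Xⁱ` in `fⁿ` is `n·aᵢ` plus an element of the
subring generated by `a₁, …, a_{i-1}`; consequently the coefficients of `fⁿ` generate
the same subring as the coefficients of `f`. -/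
theorem stmt3 (p : ℕ) (hp : p.Prime) (A : Type*) [CommRing A] [CharP A p]
    (f : PowerSeries A) (hf : PowerSeries.constantCoeff f = 1)
    (n : ℕ) (hn : 0 < n) (hpn : ¬ p ∣ n) :
    (∀ i : ℕ, 1 ≤ i →
      ∃ c ∈ Subring.closure {x : A | ∃ j, 1 ≤ j ∧ j < i ∧ x = PowerSeries.coeff j f},
        PowerSeries.coeff i (f ^ n) = n * PowerSeries.coeff i f + c) ∧
    Subring.closure {x : A | ∃ i, 1 ≤ i ∧ x = PowerSeries.coeff i (f ^ n)} =
      Subring.closure {x : A | ∃ i, 1 ≤ i ∧ x = PowerSeries.coeff i f} :=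
  stmt3_general p hp A f hf n hpn
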